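/- Let T ≥ 1 and let A be a T×T real attention matrix (nonnegative, lower triangular, row-stochastic), with out-degree diagonal matrix D given by d_ii = (Σ_u a_{ui})/(T−i) for i ∈ {0,…,T−1}, and Laplacian L = D − A. Then every eigenvalue λ of L (i.e., every root of the characteristic polynomial of L, equivalently every element of the spectrum of L) is real and satisfies −1 ≤ λ ≤ 1. -/
import Mathlib


open Matrix BigOperators Polynomial

lemma lower_charpoly {n : ℕ} (M : Matrix (Fin n) (Fin n) ℂ)
    (h : ∀ i j : Fin n, (i : ℕ) < (j : ℕ) → M i j = 0) :
    M.charpoly = ∏ i : Fin n, (X - C (M i i)) := by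
  have htri : M.BlockTriangular OrderDual.toDual := by
    intro i j hij
    exact h i j (by exact_mod_cast hij)
  have hc : M.charmatrix.BlockTriangular OrderDual.toDual := by
    intro i j hij
    have hij' : i ≠ j := by
      intro e; subst e; exact lt_irrefl _ hij
    rw [charmatrix_apply]
    rw [Matrix.diagonal_apply_ne _ hij', htri hij]
    simp
  rw [Matrix.charpoly, Matrix.det_of_lowerTriangular _ hc]
  congr 1
  ext i
  simp [charmatrix_apply]

/-- For an attention matrix `A` with out-degree diagonal matrix `D` and Laplacian
`L = D - A`, every eigenvalue of `L` (root of the characteristic polynomial over `ℂ`)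
is real and lies in `[-1, 1]`. -/
theorem attention_laplacian_eigenvalue_bounds
    (T : ℕ) (hT : 1 ≤ T)
    (A D L : Matrix (Fin T) (Fin T) ℝ)
    (hnonneg : ∀ i j, 0 ≤ A i j)
    (hlower : ∀ i j : Fin T, (i : ℕ) < (j : ℕ) → A i j = 0)
    (hrow : ∀ i, ∑ j, A i j = 1)
    (hD : D = Matrix.diagonal (fun i : Fin T => (∑ u, A u i) / ((T : ℝ) - ((i : ℕ) : ℝ))))
    (hL : L = D - A) :
    ∀ μ : ℂ, (Matrix.charpoly (L.map (fun x : ℝ => (x : ℂ)))).IsRoot μ →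
      ∃ r : ℝ, μ = (r : ℂ) ∧ -1 ≤ r ∧ r ≤ 1 := by
  intro μ hroot
  -- entries of A are at most 1
  have hle1 : ∀ i j, A i j ≤ 1 := by
    intro i j
    calc A i j ≤ ∑ k, A i k := Finset.single_le_sum (fun k _ => hnonneg i k) (Finset.mem_univ j)
    _ = 1 := hrow i
  have hLtri : ∀ i j : Fin T, (i : ℕ) < (j : ℕ) → (L.map (fun x : ℝ => (x : ℂ))) i j = 0 := by
    intro i j hij
    have hij' : i ≠ j := fun e => by subst e; exact lt_irrefl _ hij
    simp [hL, hD, Matrix.map_apply, Matrix.sub_apply, diagonal_apply_ne _ hij', hlower i j hij]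
  rw [lower_charpoly _ hLtri] at hroot
  have := hroot
  rw [Polynomial.IsRoot, Polynomial.eval_prod] at this
  obtain ⟨i, -, hi⟩ := Finset.prod_eq_zero_iff.mp this
  simp only [Polynomial.eval_sub, Polynomial.eval_X, Polynomial.eval_C, sub_eq_zero] at hi
  refine ⟨L i i, by simpa [Matrix.map_apply] using hi, ?_, ?_⟩
  · -- L i i = D i i - A i i, with 0 ≤ D i i ≤ 1 and 0 ≤ A i i ≤ 1
    have hD0 : 0 ≤ D i i := by
      rw [hD]
      simp only [diagonal_apply_eq]
      apply div_nonneg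
      · exact Finset.sum_nonneg fun u _ => hnonneg u i
      · have : (i : ℕ) < T := i.2
        have : ((i : ℕ) : ℝ) < (T : ℝ) := by exact_mod_cast this
        linarith
    have : L i i = D i i - A i i := by simp [hL]
    rw [this]
    have := hle1 i i
    linarith
  · have hDle : D i i ≤ 1 := by
      rw [hD]
      simp only [diagonal_apply_eq]
      have hiT : (i : ℕ) < T := i.2
      have hpos : (0 : ℝ) < (T : ℝ) - ((i : ℕ) : ℝ) := by
        have : ((i : ℕ) : ℝ) < (T : ℝ) := by exact_mod_cast hiT
        linarith
      rw [div_le_one hpos]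
      -- sum over u of A u i : only u with i ≤ u contribute, each ≤ 1
      calc ∑ u, A u i = ∑ u ∈ Finset.univ.filter (fun u : Fin T => (i : ℕ) ≤ (u : ℕ)), A u i := by
            rw [Finset.sum_filter_of_ne]
            intro u _ hne
            by_contra hlt
            push_neg at hlt
            exact hne (hlower u i hlt)
      _ ≤ ∑ u ∈ Finset.univ.filter (fun u : Fin T => (i : ℕ) ≤ (u : ℕ)), (1 : ℝ) :=
            Finset.sum_le_sum fun u _ => hle1 u i
      _ = ((Finset.univ.filter (fun u : Fin T => (i : ℕ) ≤ (u : ℕ))).card : ℝ) := by simp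
      _ ≤ (T : ℝ) - ((i : ℕ) : ℝ) := by
            have hset : Finset.univ.filter (fun u : Fin T => (i : ℕ) ≤ (u : ℕ)) = Finset.Ici i := by
              ext u
              simp only [Finset.mem_filter, Finset.mem_univ, true_and, Finset.mem_Ici, Fin.le_def]
            rw [hset, Fin.card_Ici]
            have : ((T - (i : ℕ) : ℕ) : ℝ) = (T : ℝ) - ((i : ℕ) : ℝ) := by
              rw [Nat.cast_sub (le_of_lt i.2)]
            rw [this]
    have hA0 : 0 ≤ A i i := hnonneg i i
    have : L i i = D i i - A i i := by simp [hL]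
    rw [this]
    linarith
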